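/- In the constructed SIA instance, if an assignment x is feasible (meets all demands within capacities S/2 per interface) and has cost exactly J, then each interface is used to exactly S/2 of its capacity and the induced partition of services into the two interfaces is a valid equal-sum partition. -/
import Mathlib


/-- In the constructed SIA instance, a feasible assignment of cost
exactly `J` fills each interface to exactly `S/2`, and the induced partition of the
services (by the interface serving them) has equal sums `S/2`. -/
theorem sia_cost_J_gives_partition
    (n : ℕ) (d : Fin n → ℕ) (hd : ∀ j, 0 < d j)
    (S : ℕ) (hS : ∑ j, d j = S) (hSeven : Even S)
    (x : Fin 2 → Fin n → ℕ)
    (hdem : ∀ j, x 0 j + x 1 j = d j)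
    (hcap : ∀ i, ∑ j, x i j ≤ S / 2)
    (hcost : (Finset.univ.filter fun p : Fin 2 × Fin n => 0 < x p.1 p.2).card = n) :
    (∀ i, ∑ j, x i j = S / 2) ∧
    (∑ j ∈ Finset.univ.filter (fun j => 0 < x 0 j), d j = S / 2) ∧
    (∑ j ∈ (Finset.univ.filter (fun j => 0 < x 0 j))ᶜ, d j = S / 2) := by
  -- rewrite cost as a double sum
  rw [Finset.card_filter, Fintype.sum_prod_type, Finset.sum_comm] at hcost
  simp only [Fin.sum_univ_two] at hcost
  -- each term is at least 1
  have hge : ∀ j ∈ Finset.univ,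
      1 ≤ (if 0 < x 0 j then 1 else 0) + (if 0 < x 1 j then 1 else 0) := by
    intro j _
    have h := hd j
    rw [← hdem j] at h
    by_cases h0 : 0 < x 0 j
    · simp [h0]
    · have h1 : 0 < x 1 j := by omega
      simp [h1]
  have hsum1 : ∑ _j : Fin n, (1 : ℕ) = n := by simp
  have heq : ∀ j ∈ Finset.univ,
      (1 : ℕ) = (if 0 < x 0 j then 1 else 0) + (if 0 < x 1 j then 1 else 0) := by
    rw [← Finset.sum_eq_sum_iff_of_le hge]
    rw [hsum1, hcost]
  -- exactly one interface per service
  have hone : ∀ j : Fin n, (x 0 j = d j ∧ x 1 j = 0) ∨ (x 0 j = 0 ∧ x 1 j = d j) := by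
    intro j
    have h := (heq j (Finset.mem_univ j)).symm
    have hdj := hdem j
    by_cases h0 : 0 < x 0 j <;> by_cases h1 : 0 < x 1 j <;> simp [h0, h1] at h ⊢ <;> omega
  -- interface sums
  have htot : ∑ j, x 0 j + ∑ j, x 1 j = S := by
    rw [← Finset.sum_add_distrib]
    simpa [hdem] using hS
  have hhalf : S / 2 + S / 2 = S := by
    obtain ⟨k, hk⟩ := hSeven
    omega
  have h0cap := hcap 0
  have h1cap := hcap 1
  have h0 : ∑ j, x 0 j = S / 2 := by omega
  have h1 : ∑ j, x 1 j = S / 2 := by omega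
  refine ⟨fun i => ?_, ?_, ?_⟩
  · fin_cases i <;> assumption
  · calc ∑ j ∈ Finset.univ.filter (fun j => 0 < x 0 j), d j
        = ∑ j ∈ Finset.univ.filter (fun j => 0 < x 0 j), x 0 j := by
          refine Finset.sum_congr rfl fun j hj => ?_
          have := (Finset.mem_filter.mp hj).2
          rcases hone j with ⟨a, b⟩ | ⟨a, b⟩ <;> omega
      _ = ∑ j, x 0 j := Finset.sum_filter_of_ne fun j _ h => Nat.pos_of_ne_zero h
      _ = S / 2 := h0
  · rw [Finset.compl_filter]
    calc ∑ j ∈ Finset.univ.filter (fun j => ¬ 0 < x 0 j), d j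
        = ∑ j ∈ Finset.univ.filter (fun j => ¬ 0 < x 0 j), x 1 j := by
          refine Finset.sum_congr rfl fun j hj => ?_
          have := (Finset.mem_filter.mp hj).2
          have := hdem j
          omega
      _ = ∑ j, x 1 j := Finset.sum_filter_of_ne fun j _ h => by
          rcases hone j with ⟨a, b⟩ | ⟨a, b⟩ <;> omega
      _ = S / 2 := h1
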